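/- arXiv:1510.00875 — 6 statements merged into one kernel-verified Lean document; each statement's English description precedes it below -/
import Mathlib

section
/- Let β, k_d, k be real constants with k² + k_d² ≠ 0, let β̃ = βk/(k² + k_d²), and define S(x,y,t) = √((kx + β̃t)² + k²y²). Then at every point where S ≠ 0, S satisfies the Rossby wave eikonal equation S_t·(S_x² + S_y² + k_d²) − β·S_x = 0. -/
noncomputable def rossbyS (β kd k : ℝ) (x y t : ℝ) : ℝ :=
  Real.sqrt ((k * x + (β * k / (k ^ 2 + kd ^ 2)) * t) ^ 2 + k ^ 2 * y ^ 2)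

/-!
With `A = kx + β̃t` we have `S² = A² + k²y²`, so `S_x = kA/S`, `S_y = k²y/S` and `S_t = β̃A/S`.
Hence `S_x² + S_y² = k²`, and the eikonal expression collapses to
`(A/S)·(β̃(k² + k_d²) − βk) = 0`.
-/

-- The paper's `β̃`.
noncomputable def rossbyDrift (β kd k : ℝ) : ℝ := β * k / (k ^ 2 + kd ^ 2)

-- When `k² + k_d² = 0` the division gives `0`, but then `k = 0` as well.
theorem rossbyDrift_mul (β kd k : ℝ) : rossbyDrift β kd k * (k ^ 2 + kd ^ 2) = β * k := by
  by_cases h : k ^ 2 + kd ^ 2 = 0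
  · have hk : k = 0 := by nlinarith [sq_nonneg k, sq_nonneg kd]
    simp [rossbyDrift, hk]
  · exact div_mul_cancel₀ _ h

theorem rossby_eikonal_of_sq_eq {β kd k c A y S : ℝ} (hS : S ≠ 0)
    (hS2 : S ^ 2 = A ^ 2 + k ^ 2 * y ^ 2) (hc : c * (k ^ 2 + kd ^ 2) = β * k) :
    c * A / S * ((k * A / S) ^ 2 + (k ^ 2 * y / S) ^ 2 + kd ^ 2) - β * (k * A / S) = 0 := by
  have hgrad : (k * A / S) ^ 2 + (k ^ 2 * y / S) ^ 2 = k ^ 2 := by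
    field_simp
    linear_combination (-k ^ 2) * hS2
  rw [hgrad]
  field_simp
  linear_combination A * hc

section

variable (β kd k x y t : ℝ)

local notation "A" => k * x + rossbyDrift β kd k * t

theorem rossbyS_eq : rossbyS β kd k x y t = √(A ^ 2 + k ^ 2 * y ^ 2) := rfl

theorem rossbyS_sq : rossbyS β kd k x y t ^ 2 = A ^ 2 + k ^ 2 * y ^ 2 :=
  Real.sq_sqrt (by positivity)

variable {β kd k x y t}

theorem rossbyS_radicand_ne_zero (hS : rossbyS β kd k x y t ≠ 0) :
    A ^ 2 + k ^ 2 * y ^ 2 ≠ 0 := fun h => hS (by rw [rossbyS_eq, h, Real.sqrt_zero])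

theorem hasDerivAt_rossbyS_x (hS : rossbyS β kd k x y t ≠ 0) :
    HasDerivAt (fun x' => rossbyS β kd k x' y t) (k * A / rossbyS β kd k x y t) x := by
  have := ((((hasDerivAt_id x).const_mul k).add_const (rossbyDrift β kd k * t)).pow 2
    |>.add_const (k ^ 2 * y ^ 2)).sqrt (rossbyS_radicand_ne_zero hS)
  exact this.congr_deriv (by rw [rossbyS_eq]; simp only [id, Pi.pow_apply]; field_simp; ring)

theorem hasDerivAt_rossbyS_y (hS : rossbyS β kd k x y t ≠ 0) :
    HasDerivAt (fun y' => rossbyS β kd k x y' t) (k ^ 2 * y / rossbyS β kd k x y t) y := by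
  have := (((hasDerivAt_id y).pow 2).const_mul (k ^ 2) |>.const_add (A ^ 2)).sqrt
    (rossbyS_radicand_ne_zero hS)
  exact this.congr_deriv (by rw [rossbyS_eq]; simp only [id, Pi.pow_apply]; field_simp; ring)

theorem hasDerivAt_rossbyS_t (hS : rossbyS β kd k x y t ≠ 0) :
    HasDerivAt (fun t' => rossbyS β kd k x y t')
      (rossbyDrift β kd k * A / rossbyS β kd k x y t) t := by
  have := ((((hasDerivAt_id t).const_mul (rossbyDrift β kd k)).const_add (k * x)).pow 2
    |>.add_const (k ^ 2 * y ^ 2)).sqrt (rossbyS_radicand_ne_zero hS)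
  exact this.congr_deriv (by rw [rossbyS_eq]; simp only [id, Pi.pow_apply]; field_simp; ring)

end

theorem stmt0_general (β kd k : ℝ) (x y t : ℝ)
    (hS : rossbyS β kd k x y t ≠ 0) :
    (deriv (fun t' => rossbyS β kd k x y t') t) *
      ((deriv (fun x' => rossbyS β kd k x' y t) x) ^ 2 +
       (deriv (fun y' => rossbyS β kd k x y' t) y) ^ 2 + kd ^ 2)
      - β * deriv (fun x' => rossbyS β kd k x' y t) x = 0 := by
  rw [(hasDerivAt_rossbyS_t hS).deriv, (hasDerivAt_rossbyS_x hS).deriv,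
    (hasDerivAt_rossbyS_y hS).deriv]
  exact rossby_eikonal_of_sq_eq hS (rossbyS_sq β kd k x y t) (rossbyDrift_mul β kd k)

/-- The phase `S(x,y,t) = √((kx + β̃t)² + k²y²)`, with `β̃ = βk/(k²+k_d²)`,
satisfies the Rossby wave eikonal equation wherever `S ≠ 0`. -/
theorem stmt0 (β kd k : ℝ) (hk : k ^ 2 + kd ^ 2 ≠ 0) (x y t : ℝ)
    (hS : rossbyS β kd k x y t ≠ 0) :
    (deriv (fun t' => rossbyS β kd k x y t') t) *
      ((deriv (fun x' => rossbyS β kd k x' y t) x) ^ 2 +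
       (deriv (fun y' => rossbyS β kd k x y' t) y) ^ 2 + kd ^ 2)
      - β * deriv (fun x' => rossbyS β kd k x' y t) x = 0 :=
  stmt0_general β kd k x y t hS
end

section
/- Let β, k_d, k be real with k² + k_d² ≠ 0, β̃ = βk/(k² + k_d²), A(x,y,t) = √((kx + β̃t)² + k²y²), and ψ(x,y,t) = J₀(A). Then wherever A ≠ 0, ψ satisfies the linearized Rossby wave equation ∂_t(ψ_xx + ψ_yy − k_d²ψ) + β·ψ_x = 0. -/
/-- Bessel function of the first kind of integer order `n`,
via the Bessel integral representation. -/
noncomputable def besselJ (n : ℤ) (z : ℝ) : ℝ :=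
  (1 / Real.pi) * ∫ θ in (0:ℝ)..Real.pi, Real.cos (n * θ - z * Real.sin θ)

noncomputable def rossbyA (β kd k : ℝ) (x y t : ℝ) : ℝ :=
  Real.sqrt ((k * x + (β * k / (k ^ 2 + kd ^ 2)) * t) ^ 2 + k ^ 2 * y ^ 2)

noncomputable def rossbyPsi (β kd k : ℝ) (x y t : ℝ) : ℝ :=
  besselJ 0 (rossbyA β kd k x y t)

/-!
Through its integral representation, `J₀` satisfies Bessel's equation `z J₀'' + J₀' + z J₀ = 0`.
In the variables `u = kx + β̃t`, `v = ky` the function `ψ = J₀(√(u² + v²))` is radial, so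
`ψ_xx + ψ_yy = k² (J₀''(A) + J₀'(A)/A) = -k² ψ` and `∇²ψ - k_d²ψ = -(k² + k_d²) ψ`.
Moreover `ψ_t = (β̃/k) ψ_x`, so the equation reduces to `(k² + k_d²) β̃ = β k`.
-/

open Real intervalIntegral

theorem hasDerivAt_intervalIntegral_of_abs_deriv_le {F F' : ℝ → ℝ → ℝ} {a b C : ℝ}
    (hF : Continuous (Function.uncurry F)) (hF' : Continuous (Function.uncurry F'))
    (h_bound : ∀ z θ, |F' z θ| ≤ C) (h_diff : ∀ z θ, HasDerivAt (F · θ) (F' z θ) z) (z : ℝ) :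
    HasDerivAt (fun w => ∫ θ in a..b, F w θ) (∫ θ in a..b, F' z θ) z := by
  have hF_slice (w : ℝ) : Continuous (F w) := hF.comp (continuous_const.prodMk continuous_id)
  have hF'_slice : Continuous (F' z) := hF'.comp (continuous_const.prodMk continuous_id)
  exact (hasDerivAt_integral_of_dominated_loc_of_deriv_le (bound := fun _ => C) Filter.univ_mem
    (.of_forall fun w => (hF_slice w).aestronglyMeasurable) ((hF_slice z).intervalIntegrable _ _)
    hF'_slice.aestronglyMeasurable (.of_forall fun θ _ w _ => h_bound w θ)
    intervalIntegrable_const (.of_forall fun θ _ w _ => h_diff w θ)).2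

theorem besselJ_zero_apply (z : ℝ) : besselJ 0 z = π⁻¹ * ∫ θ in 0..π, cos (z * sin θ) := by
  simp [besselJ, cos_neg]

noncomputable def derivBesselJ0 (z : ℝ) : ℝ :=
  π⁻¹ * ∫ θ in 0..π, -(sin θ * sin (z * sin θ))

noncomputable def deriv2BesselJ0 (z : ℝ) : ℝ :=
  π⁻¹ * ∫ θ in 0..π, -(sin θ ^ 2 * cos (z * sin θ))

theorem hasDerivAt_besselJ_zero (z : ℝ) : HasDerivAt (besselJ 0) (derivBesselJ0 z) z := by
  have h_bound (w θ : ℝ) : |-(sin θ * sin (w * sin θ))| ≤ 1 := by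
    rw [abs_neg, abs_mul]
    exact mul_le_one₀ (abs_sin_le_one _) (abs_nonneg _) (abs_sin_le_one _)
  have h_diff (w θ : ℝ) :
      HasDerivAt (fun w => cos (w * sin θ)) (-(sin θ * sin (w * sin θ))) w :=
    (hasDerivAt_mul_const (sin θ)).cos.congr_deriv (by ring)
  rw [funext besselJ_zero_apply]
  exact (hasDerivAt_intervalIntegral_of_abs_deriv_le (by fun_prop) (by fun_prop) h_bound
    h_diff z).const_mul _

theorem hasDerivAt_derivBesselJ0 (z : ℝ) : HasDerivAt derivBesselJ0 (deriv2BesselJ0 z) z := by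
  have h_bound (w θ : ℝ) : |-(sin θ ^ 2 * cos (w * sin θ))| ≤ 1 := by
    rw [abs_neg, abs_mul, abs_pow]
    exact mul_le_one₀ (pow_le_one₀ (abs_nonneg _) (abs_sin_le_one _)) (abs_nonneg _)
      (abs_cos_le_one _)
  have h_diff (w θ : ℝ) : HasDerivAt (fun w => -(sin θ * sin (w * sin θ)))
      (-(sin θ ^ 2 * cos (w * sin θ))) w :=
    ((hasDerivAt_mul_const (sin θ)).sin.const_mul (sin θ)).neg.congr_deriv (by ring)
  exact (hasDerivAt_intervalIntegral_of_abs_deriv_le (by fun_prop) (by fun_prop) h_bound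
    h_diff z).const_mul _

/-- The integrand is the `θ`-derivative of `cos θ · sin (z sin θ)`, which vanishes at both ends
of `[0, π]`. -/
theorem besselJ_zero_ode (z : ℝ) :
    z * deriv2BesselJ0 z + derivBesselJ0 z + z * besselJ 0 z = 0 := by
  have h_diff (θ : ℝ) : HasDerivAt (fun θ => cos θ * sin (z * sin θ))
      (z * -(sin θ ^ 2 * cos (z * sin θ)) + -(sin θ * sin (z * sin θ))
        + z * cos (z * sin θ)) θ := by
    refine ((hasDerivAt_cos θ).mul ((hasDerivAt_sin θ).const_mul z).sin).congr_deriv ?_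
    linear_combination z * cos (z * sin θ) * sin_sq_add_cos_sq θ
  have h_ii {f : ℝ → ℝ} (hf : Continuous f) : IntervalIntegrable f MeasureTheory.volume 0 π :=
    hf.intervalIntegrable _ _
  have h_int : (∫ θ in 0..π, z * -(sin θ ^ 2 * cos (z * sin θ)) + -(sin θ * sin (z * sin θ))
      + z * cos (z * sin θ)) = 0 := by
    rw [integral_eq_sub_of_hasDerivAt (fun θ _ => h_diff θ) (h_ii (by fun_prop))]
    simp
  rw [integral_add (h_ii (by fun_prop)) (h_ii (by fun_prop)),
    integral_add (h_ii (by fun_prop)) (h_ii (by fun_prop)),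
    integral_const_mul, integral_const_mul] at h_int
  rw [deriv2BesselJ0, derivBesselJ0, besselJ_zero_apply]
  linear_combination π⁻¹ * h_int

theorem deriv2BesselJ0_add_derivBesselJ0_div {z : ℝ} (hz : z ≠ 0) :
    deriv2BesselJ0 z + derivBesselJ0 z / z = -besselJ 0 z := by
  field_simp
  linear_combination besselJ_zero_ode z

theorem hasDerivAt_sqrt_sq_add {w : ℝ → ℝ} {w' d s : ℝ} (hw : HasDerivAt w w' s)
    (h : 0 < w s ^ 2 + d) :
    HasDerivAt (fun s => √(w s ^ 2 + d)) (w s * w' / √(w s ^ 2 + d)) s := by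
  have hR : √(w s ^ 2 + d) ≠ 0 := (sqrt_pos.mpr h).ne'
  have hq : HasDerivAt (fun s => w s ^ 2 + d) (2 * w s * w') s := by
    simpa using (hw.pow 2).add_const d
  refine (hq.sqrt h.ne').congr_deriv ?_
  field_simp

section Radial

variable {g g' g'' : ℝ → ℝ} (hg : ∀ z, HasDerivAt g (g' z) z)
  (hg' : ∀ z, HasDerivAt g' (g'' z) z)
include hg

theorem hasDerivAt_comp_sqrt_sq_add {w : ℝ → ℝ} {w' d s : ℝ} (hw : HasDerivAt w w' s)
    (h : 0 < w s ^ 2 + d) :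
    HasDerivAt (fun s => g √(w s ^ 2 + d))
      (g' √(w s ^ 2 + d) * (w s * w' / √(w s ^ 2 + d))) s :=
  (hg _).comp s (hasDerivAt_sqrt_sq_add hw h)

include hg'

theorem deriv_deriv_comp_sqrt_affine_sq_add {m c d s : ℝ} (h : 0 < (m * s + c) ^ 2 + d) :
    deriv (fun s' => deriv (fun s => g √((m * s + c) ^ 2 + d)) s') s =
      m ^ 2 * (g'' √((m * s + c) ^ 2 + d) * (m * s + c) ^ 2 / ((m * s + c) ^ 2 + d)
        + g' √((m * s + c) ^ 2 + d) * d / √((m * s + c) ^ 2 + d) ^ 3) := by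
  have h_affine (s : ℝ) : HasDerivAt (fun s => m * s + c) m s :=
    (hasDerivAt_const_mul m).add_const c
  have h_deriv : (fun s' => deriv (fun s => g √((m * s + c) ^ 2 + d)) s') =ᶠ[nhds s]
      fun s => g' √((m * s + c) ^ 2 + d) * ((m * s + c) * m / √((m * s + c) ^ 2 + d)) := by
    have h_nhds : ∀ᶠ s' in nhds s, 0 < (m * s' + c) ^ 2 + d :=
      (by fun_prop : Continuous fun s => (m * s + c) ^ 2 + d).continuousAt.eventually
        (lt_mem_nhds h)
    filter_upwards [h_nhds] with s' hs'
    exact (hasDerivAt_comp_sqrt_sq_add hg (h_affine s') hs').deriv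
  have hR := hasDerivAt_sqrt_sq_add (h_affine s) h
  have hR_pos : 0 < √((m * s + c) ^ 2 + d) := sqrt_pos.mpr h
  have hR_sq : √((m * s + c) ^ 2 + d) ^ 2 = (m * s + c) ^ 2 + d := sq_sqrt h.le
  rw [h_deriv.deriv_eq]
  refine (((hg' _).comp s hR).mul (((h_affine s).mul_const m).div hR hR_pos.ne')).deriv.trans ?_
  simp only [Function.comp_apply, Pi.div_apply]
  generalize √((m * s + c) ^ 2 + d) = R at hR_pos hR_sq ⊢
  obtain rfl : d = R ^ 2 - (m * s + c) ^ 2 := by linarith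
  field_simp
  ring

theorem deriv_deriv_add_deriv_deriv_comp_sqrt {k c x y : ℝ}
    (h : 0 < (k * x + c) ^ 2 + k ^ 2 * y ^ 2) :
    deriv (fun x' => deriv (fun x => g √((k * x + c) ^ 2 + k ^ 2 * y ^ 2)) x') x
      + deriv (fun y' => deriv (fun y => g √((k * x + c) ^ 2 + k ^ 2 * y ^ 2)) y') y
      = k ^ 2 * (g'' √((k * x + c) ^ 2 + k ^ 2 * y ^ 2)
        + g' √((k * x + c) ^ 2 + k ^ 2 * y ^ 2) / √((k * x + c) ^ 2 + k ^ 2 * y ^ 2)) := by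
  have h_swap (y : ℝ) : (k * x + c) ^ 2 + k ^ 2 * y ^ 2 = (k * y + 0) ^ 2 + (k * x + c) ^ 2 := by
    ring
  have h' : 0 < (k * y + 0) ^ 2 + (k * x + c) ^ 2 := h_swap y ▸ h
  simp only [h_swap]
  rw [deriv_deriv_comp_sqrt_affine_sq_add hg hg' h, deriv_deriv_comp_sqrt_affine_sq_add hg hg' h',
    ← h_swap]
  have hR_pos : 0 < √((k * x + c) ^ 2 + k ^ 2 * y ^ 2) := sqrt_pos.mpr h
  have hR_sq := sq_sqrt h.le
  generalize √((k * x + c) ^ 2 + k ^ 2 * y ^ 2) = R at hR_pos hR_sq ⊢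
  field_simp
  linear_combination (-k ^ 2 * g' R * ((k * x + c) ^ 2 + k ^ 2 * y ^ 2)) * hR_sq

end Radial

theorem deriv_deriv_add_deriv_deriv_rossbyPsi {β kd k x y t : ℝ}
    (hA : rossbyA β kd k x y t ≠ 0) :
    deriv (fun x' => deriv (fun x'' => rossbyPsi β kd k x'' y t) x') x +
      deriv (fun y' => deriv (fun y'' => rossbyPsi β kd k x y'' t) y') y
      = -k ^ 2 * rossbyPsi β kd k x y t := by
  unfold rossbyA at hA
  unfold rossbyPsi rossbyA
  rw [deriv_deriv_add_deriv_deriv_comp_sqrt hasDerivAt_besselJ_zero hasDerivAt_derivBesselJ0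
    (sqrt_ne_zero'.mp hA), deriv2BesselJ0_add_derivBesselJ0_div hA]
  ring

/-- With `A = √((kx + β̃t)² + k²y²)`, `β̃ = βk/(k²+k_d²)`, the function
`ψ = J₀(A)` satisfies the linearized Rossby wave equation
`∂_t(ψ_xx + ψ_yy − k_d²ψ) + β ψ_x = 0` wherever `A ≠ 0`. -/
theorem stmt6 (β kd k : ℝ) (hk : k ^ 2 + kd ^ 2 ≠ 0) (x y t : ℝ)
    (hA : rossbyA β kd k x y t ≠ 0) :
    deriv (fun t' =>
        deriv (fun x' => deriv (fun x'' => rossbyPsi β kd k x'' y t') x') x +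
        deriv (fun y' => deriv (fun y'' => rossbyPsi β kd k x y'' t') y') y -
        kd ^ 2 * rossbyPsi β kd k x y t') t
      + β * deriv (fun x' => rossbyPsi β kd k x' y t) x = 0 := by
  have h_lap : (fun t' =>
      deriv (fun x' => deriv (fun x'' => rossbyPsi β kd k x'' y t') x') x +
        deriv (fun y' => deriv (fun y'' => rossbyPsi β kd k x y'' t') y') y -
        kd ^ 2 * rossbyPsi β kd k x y t') =ᶠ[nhds t]
      fun t' => -(k ^ 2 + kd ^ 2) * rossbyPsi β kd k x y t' := by
    have h_cont : Continuous (rossbyA β kd k x y) := by unfold rossbyA; fun_prop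
    filter_upwards [h_cont.continuousAt.eventually_ne hA] with t' hA'
    rw [deriv_deriv_add_deriv_deriv_rossbyPsi hA']
    ring
  set b := β * k / (k ^ 2 + kd ^ 2)
  have h_pos : 0 < (k * x + b * t) ^ 2 + k ^ 2 * y ^ 2 := sqrt_ne_zero'.mp hA
  have h_t : HasDerivAt (rossbyPsi β kd k x y)
      (derivBesselJ0 (rossbyA β kd k x y t) * ((k * x + b * t) * b / rossbyA β kd k x y t)) t :=
    hasDerivAt_comp_sqrt_sq_add hasDerivAt_besselJ_zero ((hasDerivAt_const_mul b).const_add _)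
      h_pos
  have h_x : HasDerivAt (fun x' => rossbyPsi β kd k x' y t)
      (derivBesselJ0 (rossbyA β kd k x y t) * ((k * x + b * t) * k / rossbyA β kd k x y t)) x :=
    hasDerivAt_comp_sqrt_sq_add hasDerivAt_besselJ_zero ((hasDerivAt_const_mul k).add_const _)
      h_pos
  have h_b : (k ^ 2 + kd ^ 2) * b = β * k := mul_div_cancel₀ _ hk
  rw [h_lap.deriv_eq, (h_t.const_mul _).deriv, h_x.deriv]
  linear_combination
    -(derivBesselJ0 (rossbyA β kd k x y t) * ((k * x + b * t) / rossbyA β kd k x y t)) * h_b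
end

section
/- Let Ω, β, k_d, k be real constants with Ω ≠ 0 and k² + k_d² ≠ 0, a = kβ/((k² + k_d²)Ω), D(x,y,t) = √((kx + a·sin(Ωt))² + (ky + a − a·cos(Ωt))²), and ψ = J₀(D). Then at every point where D ≠ 0, ψ satisfies the rotating-wind Rossby wave equation [∂_t + Ω(x·∂_y − y·∂_x)](ψ_xx + ψ_yy − k_d²ψ) + β·ψ_x = 0. -/
noncomputable def rotD (β kd k Ω : ℝ) (x y t : ℝ) : ℝ :=
  Real.sqrt ((k * x + (k * β / ((k ^ 2 + kd ^ 2) * Ω)) * Real.sin (Ω * t)) ^ 2 +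
             (k * y + (k * β / ((k ^ 2 + kd ^ 2) * Ω)) -
               (k * β / ((k ^ 2 + kd ^ 2) * Ω)) * Real.cos (Ω * t)) ^ 2)

noncomputable def rotPsi (β kd k Ω : ℝ) (x y t : ℝ) : ℝ :=
  besselJ 0 (rotD β kd k Ω x y t)

/-- `G = ψ_xx + ψ_yy − k_d²ψ` for `ψ = J₀(D)`. -/
noncomputable def rotG (β kd k Ω : ℝ) (x y t : ℝ) : ℝ :=
  deriv (fun x' => deriv (fun x'' => rotPsi β kd k Ω x'' y t) x') x +
  deriv (fun y' => deriv (fun y'' => rotPsi β kd k Ω x y'' t) y') y -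
  kd ^ 2 * rotPsi β kd k Ω x y t

/-!
Differentiating under the Bessel integral, `J₀` solves Bessel's equation of order zero (the
integrand of the equation is an exact `θ`-derivative), so `ψ = J₀(D)`, with
`D = |k (x, y) + c(t)|`, solves the Helmholtz equation `ψ_xx + ψ_yy = -k² ψ` wherever `D ≠ 0`;
hence `ψ_xx + ψ_yy - k_d² ψ = -(k² + k_d²) ψ`. The centre `c(t) = (a sin Ωt, a - a cos Ωt)`
moves so that `k [∂_t + Ω(x∂_y − y∂_x)] ψ = Ω a ψ_x`, and `a` is chosen with
`(k² + k_d²) Ω a = k β`.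
-/

open Real intervalIntegral

theorem hasDerivAt_integral_comp_sub_mul_sin {g g' : ℝ → ℝ} (hg : ∀ u, HasDerivAt g (g' u) u)
    (hg'_cont : Continuous g') (hg'_le : ∀ u, |g' u| ≤ 1) (n : ℤ) (m : ℕ) (z : ℝ) :
    HasDerivAt (fun z => ∫ θ in (0:ℝ)..π, g (n * θ - z * sin θ) * sin θ ^ m)
      (∫ θ in (0:ℝ)..π, -(g' (n * θ - z * sin θ) * sin θ ^ (m + 1))) z := by
  have hg_cont : Continuous g := continuous_iff_continuousAt.2 fun u => (hg u).continuousAt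
  refine (hasDerivAt_integral_of_dominated_loc_of_deriv_le (bound := fun _ => 1)
    (F := fun z θ => g (n * θ - z * sin θ) * sin θ ^ m)
    (F' := fun z θ => -(g' (n * θ - z * sin θ) * sin θ ^ (m + 1)))
    Filter.univ_mem (.of_forall fun z => (by fun_prop : Continuous _).aestronglyMeasurable)
    ((by fun_prop : Continuous _).intervalIntegrable _ _)
    (by fun_prop : Continuous _).aestronglyMeasurable
    (.of_forall fun θ _ w _ => ?_) intervalIntegrable_const
    (.of_forall fun θ _ w _ => ?_)).2
  · rw [norm_neg, norm_mul, norm_pow]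
    exact mul_le_one₀ (hg'_le _) (by positivity) (pow_le_one₀ (norm_nonneg _) (abs_sin_le_one θ))
  · have hφ : HasDerivAt (fun w => n * θ - w * sin θ) (-sin θ) w := by
      simpa using (hasDerivAt_mul_const (sin θ)).const_sub ((n : ℝ) * θ)
    refine (((hg _).comp w hφ).mul_const (sin θ ^ m)).congr_deriv ?_
    ring

noncomputable def besselJDeriv (n : ℤ) (z : ℝ) : ℝ :=
  (1 / π) * ∫ θ in (0:ℝ)..π, sin (n * θ - z * sin θ) * sin θ

noncomputable def besselJDeriv2 (n : ℤ) (z : ℝ) : ℝ :=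
  (1 / π) * ∫ θ in (0:ℝ)..π, -(cos (n * θ - z * sin θ) * sin θ ^ 2)

theorem hasDerivAt_besselJ (n : ℤ) (z : ℝ) : HasDerivAt (besselJ n) (besselJDeriv n z) z := by
  have h := (hasDerivAt_integral_comp_sub_mul_sin (fun u => hasDerivAt_cos u)
    continuous_sin.neg (fun u => by simpa using abs_sin_le_one u) n 0 z).const_mul (1 / π)
  have hJ : besselJ n = fun z => 1 / π * ∫ θ in (0:ℝ)..π, cos (n * θ - z * sin θ) * sin θ ^ 0 := by
    funext w
    simp [besselJ]
  rw [hJ]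
  exact h.congr_deriv (by simp [besselJDeriv])

theorem hasDerivAt_besselJDeriv (n : ℤ) (z : ℝ) :
    HasDerivAt (besselJDeriv n) (besselJDeriv2 n z) z := by
  have h := (hasDerivAt_integral_comp_sub_mul_sin (fun u => hasDerivAt_sin u)
    continuous_cos abs_cos_le_one n 1 z).const_mul (1 / π)
  have hJ' : besselJDeriv n
      = fun z => 1 / π * ∫ θ in (0:ℝ)..π, sin (n * θ - z * sin θ) * sin θ ^ 1 := by
    funext w
    simp [besselJDeriv]
  rw [hJ']
  exact h.congr_deriv (by norm_num [besselJDeriv2])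

theorem besselJ_ode (n : ℤ) (z : ℝ) :
    z ^ 2 * besselJDeriv2 n z + z * besselJDeriv n z + (z ^ 2 - n ^ 2) * besselJ n z = 0 := by
  have hF : ∀ θ ∈ Set.uIcc 0 π,
      HasDerivAt (fun θ => -((n + z * cos θ) * sin (n * θ - z * sin θ)))
        (z ^ 2 * -(cos (n * θ - z * sin θ) * sin θ ^ 2) + z * (sin (n * θ - z * sin θ) * sin θ)
          + (z ^ 2 - n ^ 2) * cos (n * θ - z * sin θ)) θ := by
    intro θ _
    have hφ : HasDerivAt (fun θ => n * θ - z * sin θ) (n - z * cos θ) θ :=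
      (((hasDerivAt_id' θ).const_mul (n : ℝ)).sub ((hasDerivAt_sin θ).const_mul z)).congr_deriv
        (by ring)
    refine ((((hasDerivAt_cos θ).const_mul z).const_add (n : ℝ)).mul hφ.sin).neg.congr_deriv ?_
    linear_combination (z ^ 2 * cos (n * θ - z * sin θ)) * sin_sq_add_cos_sq θ
  have hint : ∀ f : ℝ → ℝ, Continuous f → IntervalIntegrable f MeasureTheory.volume 0 π :=
    fun f hf => hf.intervalIntegrable _ _
  have hsum := integral_eq_sub_of_hasDerivAt hF (hint _ (by fun_prop))
  rw [integral_add (hint _ (by fun_prop)) (hint _ (by fun_prop)),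
    integral_add (hint _ (by fun_prop)) (hint _ (by fun_prop)),
    integral_const_mul, integral_const_mul, integral_const_mul] at hsum
  simp only [sin_pi, sin_zero, mul_zero, sub_zero, sin_int_mul_pi, neg_zero] at hsum
  simp only [besselJ, besselJDeriv, besselJDeriv2]
  linear_combination (1 / π) * hsum

section SqrtSqAddSq

variable {p q : ℝ → ℝ} {p' q' s : ℝ}

theorem HasDerivAt.sqrt_sq_add_sq (hp : HasDerivAt p p' s) (hq : HasDerivAt q q' s)
    (h : √(p s ^ 2 + q s ^ 2) ≠ 0) :
    HasDerivAt (fun r => √(p r ^ 2 + q r ^ 2))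
      ((p s * p' + q s * q') / √(p s ^ 2 + q s ^ 2)) s := by
  have hQ : p s ^ 2 + q s ^ 2 ≠ 0 := fun h0 => h (by rw [h0, sqrt_zero])
  refine (((hp.pow 2).add (hq.pow 2)).sqrt hQ).congr_deriv ?_
  simp only [Pi.add_apply, Pi.pow_apply]
  field_simp
  ring

theorem HasDerivAt.comp_sqrt_sq_add_sq {f : ℝ → ℝ} {f' : ℝ}
    (hf : HasDerivAt f f' √(p s ^ 2 + q s ^ 2)) (hp : HasDerivAt p p' s)
    (hq : HasDerivAt q q' s) (h : √(p s ^ 2 + q s ^ 2) ≠ 0) :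
    HasDerivAt (fun r => f √(p r ^ 2 + q r ^ 2))
      (f' * ((p s * p' + q s * q') / √(p s ^ 2 + q s ^ 2))) s :=
  hf.comp s (hp.sqrt_sq_add_sq hq h)

end SqrtSqAddSq

section Radial

variable {f f' f'' : ℝ → ℝ}

theorem deriv_deriv_comp_sqrt_sq_add_sq (hf : ∀ z, HasDerivAt f (f' z) z)
    (hf' : ∀ z, HasDerivAt f' (f'' z) z) (b c w s : ℝ) (h : √((b * s + c) ^ 2 + w ^ 2) ≠ 0) :
    deriv (fun r => deriv (fun r' => f √((b * r' + c) ^ 2 + w ^ 2)) r) s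
      = b ^ 2 * (f'' √((b * s + c) ^ 2 + w ^ 2) * (b * s + c) ^ 2 / √((b * s + c) ^ 2 + w ^ 2) ^ 2
          + f' √((b * s + c) ^ 2 + w ^ 2) * w ^ 2 / √((b * s + c) ^ 2 + w ^ 2) ^ 3) := by
  have hline : ∀ r, HasDerivAt (fun r' => b * r' + c) b r := fun r =>
    ((hasDerivAt_id' r).const_mul b).add_const c |>.congr_deriv (mul_one b)
  have hw : ∀ r, HasDerivAt (fun _ : ℝ => w) 0 r := fun r => hasDerivAt_const r w
  have hd : Continuous fun r => √((b * r + c) ^ 2 + w ^ 2) := by fun_prop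
  have hfirst : (fun r => deriv (fun r' => f √((b * r' + c) ^ 2 + w ^ 2)) r) =ᶠ[nhds s]
      fun r => f' √((b * r + c) ^ 2 + w ^ 2)
        * (((b * r + c) * b + w * 0) / √((b * r + c) ^ 2 + w ^ 2)) :=
    (hd.continuousAt.eventually_ne h).mono fun r hr =>
      ((hf _).comp_sqrt_sq_add_sq (hline r) (hw r) hr).deriv
  rw [hfirst.deriv_eq]
  set D := √((b * s + c) ^ 2 + w ^ 2) with hD
  have hnum : HasDerivAt (fun r => (b * r + c) * b + w * 0) (b * b) s :=
    ((hline s).mul_const b).add_const _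
  have hsecond : HasDerivAt (fun r => f' √((b * r + c) ^ 2 + w ^ 2)
      * (((b * r + c) * b + w * 0) / √((b * r + c) ^ 2 + w ^ 2))) _ s :=
    ((hf' _).comp_sqrt_sq_add_sq (hline s) (hw s) h).mul
      (hnum.div ((hline s).sqrt_sq_add_sq (hw s) h) h)
  have hD2 : w ^ 2 = D ^ 2 - (b * s + c) ^ 2 := by rw [hD, sq_sqrt (by positivity)]; ring
  rw [hsecond.deriv, ← hD, hD2]
  field_simp
  ring

theorem laplacian_comp_sqrt_sq_add_sq_of_bessel_ode (hf : ∀ z, HasDerivAt f (f' z) z)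
    (hf' : ∀ z, HasDerivAt f' (f'' z) z)
    (hode : ∀ z, z ^ 2 * f'' z + z * f' z + z ^ 2 * f z = 0) (k p q x y : ℝ)
    (h : √((k * x + p) ^ 2 + (k * y + q) ^ 2) ≠ 0) :
    deriv (fun x' => deriv (fun x'' => f √((k * x'' + p) ^ 2 + (k * y + q) ^ 2)) x') x
      + deriv (fun y' => deriv (fun y'' => f √((k * x + p) ^ 2 + (k * y'' + q) ^ 2)) y') y
      = -k ^ 2 * f √((k * x + p) ^ 2 + (k * y + q) ^ 2) := by
  have hswap : (fun y' => deriv (fun y'' => f √((k * x + p) ^ 2 + (k * y'' + q) ^ 2)) y')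
      = fun y' => deriv (fun y'' => f √((k * y'' + q) ^ 2 + (k * x + p) ^ 2)) y' := by
    simp only [add_comm ((k * x + p) ^ 2)]
  rw [hswap, deriv_deriv_comp_sqrt_sq_add_sq hf hf' k p _ x h,
    deriv_deriv_comp_sqrt_sq_add_sq hf hf' k q _ y (by rwa [add_comm]), add_comm ((k * y + q) ^ 2)]
  set D := √((k * x + p) ^ 2 + (k * y + q) ^ 2) with hD
  have hD2 : D ^ 2 = (k * x + p) ^ 2 + (k * y + q) ^ 2 := sq_sqrt (by positivity)
  calc _ = k ^ 2 * (f'' D * D ^ 2 / D ^ 2 + f' D * D ^ 2 / D ^ 3) := by rw [hD2]; ring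
    _ = k ^ 2 / D ^ 2 * (D ^ 2 * f'' D + D * f' D + D ^ 2 * f D) - k ^ 2 * f D := by
      field_simp
      ring
    _ = -k ^ 2 * f D := by rw [hode]; ring

end Radial

section RotatingWind

variable {β kd k Ω x y t : ℝ}

noncomputable def rotAmp (β kd k Ω : ℝ) : ℝ := k * β / ((k ^ 2 + kd ^ 2) * Ω)

noncomputable def rotP (β kd k Ω x t : ℝ) : ℝ := k * x + rotAmp β kd k Ω * sin (Ω * t)

noncomputable def rotQ (β kd k Ω y t : ℝ) : ℝ :=
  k * y + rotAmp β kd k Ω - rotAmp β kd k Ω * cos (Ω * t)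

theorem rotD_eq : rotD β kd k Ω x y t = √(rotP β kd k Ω x t ^ 2 + rotQ β kd k Ω y t ^ 2) := rfl

theorem continuous_rotD :
    Continuous fun p : ℝ × ℝ × ℝ => rotD β kd k Ω p.1 p.2.1 p.2.2 := by
  unfold rotD
  fun_prop

theorem rotG_eq (h : rotD β kd k Ω x y t ≠ 0) :
    rotG β kd k Ω x y t = -(k ^ 2 + kd ^ 2) * rotPsi β kd k Ω x y t := by
  have hQ : ∀ y', rotQ β kd k Ω y' t
      = k * y' + (rotAmp β kd k Ω - rotAmp β kd k Ω * cos (Ω * t)) :=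
    fun _ => add_sub_assoc _ _ _
  rw [rotD_eq, hQ] at h
  have hΔ := laplacian_comp_sqrt_sq_add_sq_of_bessel_ode (hasDerivAt_besselJ 0)
    (hasDerivAt_besselJDeriv 0) (fun z => by simpa using besselJ_ode 0 z) k _ _ x y h
  simp only [rotG, rotPsi, rotD_eq, rotP, hQ]
  linear_combination hΔ

theorem rotG_eventuallyEq_along {γ : ℝ → ℝ × ℝ × ℝ} {s : ℝ} (hγ : ContinuousAt γ s)
    (h : rotD β kd k Ω (γ s).1 (γ s).2.1 (γ s).2.2 ≠ 0) :
    (fun r => rotG β kd k Ω (γ r).1 (γ r).2.1 (γ r).2.2)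
      =ᶠ[nhds s] fun r => -(k ^ 2 + kd ^ 2) * rotPsi β kd k Ω (γ r).1 (γ r).2.1 (γ r).2.2 :=
  ((continuous_rotD.continuousAt.comp hγ).eventually_ne h).mono fun _ hr => rotG_eq hr

theorem hasDerivAt_rotPsi_x (h : rotD β kd k Ω x y t ≠ 0) :
    HasDerivAt (fun x' => rotPsi β kd k Ω x' y t)
      (besselJDeriv 0 (rotD β kd k Ω x y t) * (rotP β kd k Ω x t * k / rotD β kd k Ω x y t)) x := by
  have hP : HasDerivAt (fun x' => rotP β kd k Ω x' t) k x :=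
    (((hasDerivAt_id' x).const_mul k).add_const _).congr_deriv (mul_one k)
  exact ((hasDerivAt_besselJ 0 _).comp_sqrt_sq_add_sq hP
    (hasDerivAt_const x (rotQ β kd k Ω y t)) h).congr_deriv
    (by rw [rotD_eq]; ring)

theorem hasDerivAt_rotPsi_y (h : rotD β kd k Ω x y t ≠ 0) :
    HasDerivAt (fun y' => rotPsi β kd k Ω x y' t)
      (besselJDeriv 0 (rotD β kd k Ω x y t) * (rotQ β kd k Ω y t * k / rotD β kd k Ω x y t)) y := by
  have hQ : HasDerivAt (fun y' => rotQ β kd k Ω y' t) k y :=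
    ((((hasDerivAt_id' y).const_mul k).add_const _).sub_const _).congr_deriv (mul_one k)
  exact ((hasDerivAt_besselJ 0 _).comp_sqrt_sq_add_sq
    (hasDerivAt_const y (rotP β kd k Ω x t)) hQ h).congr_deriv
    (by rw [rotD_eq]; ring)

theorem hasDerivAt_rotPsi_t (h : rotD β kd k Ω x y t ≠ 0) :
    HasDerivAt (fun t' => rotPsi β kd k Ω x y t')
      (besselJDeriv 0 (rotD β kd k Ω x y t) * (rotAmp β kd k Ω * Ω *
        (rotP β kd k Ω x t * cos (Ω * t) + rotQ β kd k Ω y t * sin (Ω * t))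
          / rotD β kd k Ω x y t)) t := by
  have hΩt : HasDerivAt (fun t' => Ω * t') Ω t :=
    ((hasDerivAt_id' t).const_mul Ω).congr_deriv (mul_one Ω)
  have hP : HasDerivAt (fun t' => rotP β kd k Ω x t') (rotAmp β kd k Ω * (cos (Ω * t) * Ω)) t :=
    (hΩt.sin.const_mul _).const_add _
  have hQ : HasDerivAt (fun t' => rotQ β kd k Ω y t')
      (-(rotAmp β kd k Ω * (-sin (Ω * t) * Ω))) t :=
    (hΩt.cos.const_mul _).const_sub _
  exact ((hasDerivAt_besselJ 0 _).comp_sqrt_sq_add_sq hP hQ h).congr_deriv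
    (by rw [rotD_eq]; ring)

/-- Multiplied by `Ω / D`, this says `[∂_t + Ω(x∂_y − y∂_x)] D = Ω a P / D`: the rotating wind
moves the pattern like `(Ω a / k) ∂_x`. -/
theorem rotAmp_mul_rotP_eq :
    rotAmp β kd k Ω * (rotP β kd k Ω x t * cos (Ω * t) + rotQ β kd k Ω y t * sin (Ω * t))
      + k * (x * rotQ β kd k Ω y t - y * rotP β kd k Ω x t)
      = rotAmp β kd k Ω * rotP β kd k Ω x t := by
  unfold rotP rotQ
  ring

theorem rotAmp_mul (hΩ : Ω ≠ 0) (hk : k ^ 2 + kd ^ 2 ≠ 0) :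
    rotAmp β kd k Ω * ((k ^ 2 + kd ^ 2) * Ω) = k * β := by
  unfold rotAmp
  field_simp

end RotatingWind

/-- With `a = kβ/((k²+k_d²)Ω)` and `D` the rotating-wind Bessel argument,
`ψ = J₀(D)` satisfies `[∂_t + Ω(x∂_y − y∂_x)](ψ_xx + ψ_yy − k_d²ψ) + βψ_x = 0`
wherever `D ≠ 0`. -/
theorem stmt7 (β kd k Ω : ℝ) (hΩ : Ω ≠ 0) (hk : k ^ 2 + kd ^ 2 ≠ 0) (x y t : ℝ)
    (hD : rotD β kd k Ω x y t ≠ 0) :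
    deriv (fun t' => rotG β kd k Ω x y t') t
      + Ω * (x * deriv (fun y' => rotG β kd k Ω x y' t) y
             - y * deriv (fun x' => rotG β kd k Ω x' y t) x)
      + β * deriv (fun x' => rotPsi β kd k Ω x' y t) x = 0 := by
  have hGx := ((hasDerivAt_rotPsi_x hD).const_mul _).congr_of_eventuallyEq
    (rotG_eventuallyEq_along (γ := fun x' => (x', y, t)) (by fun_prop) hD)
  have hGy := ((hasDerivAt_rotPsi_y hD).const_mul _).congr_of_eventuallyEq
    (rotG_eventuallyEq_along (γ := fun y' => (x, y', t)) (by fun_prop) hD)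
  have hGt := ((hasDerivAt_rotPsi_t hD).const_mul _).congr_of_eventuallyEq
    (rotG_eventuallyEq_along (γ := fun t' => (x, y, t')) (by fun_prop) hD)
  rw [hGt.deriv, hGy.deriv, hGx.deriv, (hasDerivAt_rotPsi_x hD).deriv]
  have hadv := rotAmp_mul_rotP_eq (β := β) (kd := kd) (k := k) (Ω := Ω) (x := x) (y := y) (t := t)
  set J' := besselJDeriv 0 (rotD β kd k Ω x y t)
  set D := rotD β kd k Ω x y t
  linear_combination (-(J' * rotP β kd k Ω x t / D)) * rotAmp_mul (β := β) hΩ hk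
    + (-((k ^ 2 + kd ^ 2) * Ω * J' / D)) * hadv
end

section
/- For all real z and θ, exp(iz·sinθ) = ∑_{n=−∞}^{∞} J_n(z)·exp(inθ), where J_n is the Bessel function of the first kind of integer order n, and the series converges absolutely. -/
/-!
The function `θ ↦ exp (i z sin θ)` is smooth and `2π`-periodic. Integrating by parts twice over a
period bounds its `n`-th Fourier coefficient by `O(1/n²)`, so its Fourier series converges
absolutely, and then (the function being continuous) to the function itself at every point.
The `n`-th coefficient is `(2π)⁻¹ ∫₀^{2π} exp (i (z sin x - n x)) dx`; the reflection
`x ↦ 2π - x` conjugates the integrand, so this is `π⁻¹` times the real part of the integral over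
`[0, π]`, which is Bessel's integral for `J_n(z)`.
-/

open Complex MeasureTheory
open scoped Real Interval

theorem fourierCoeffOn_of_hasDerivAt_of_eq {a b : ℝ} (hab : a < b) {f f' : ℝ → ℂ} {n : ℤ}
    (hn : n ≠ 0) (hf : ∀ x ∈ [[a, b]], HasDerivAt f (f' x) x)
    (hf' : IntervalIntegrable f' volume a b) (hper : f b = f a) :
    fourierCoeffOn hab f n = ((b - a : ℝ) : ℂ) / (2 * π * I * n) * fourierCoeffOn hab f' n := by
  rw [fourierCoeffOn_of_hasDerivAt hab hn hf hf', hper, sub_self, mul_zero, zero_sub]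
  have : (n : ℂ) ≠ 0 := mod_cast hn
  field_simp
  push_cast
  ring

theorem norm_fourierCoeffOn_le {E : Type*} [NormedAddCommGroup E] [NormedSpace ℂ E]
    {a b : ℝ} (hab : a < b) {f : ℝ → E} {C : ℝ} (hC : ∀ x ∈ Ι a b, ‖f x‖ ≤ C)
    (n : ℤ) : ‖fourierCoeffOn hab f n‖ ≤ C := by
  have hba : 0 < b - a := sub_pos.2 hab
  rw [fourierCoeffOn_eq_integral, norm_smul, Real.norm_of_nonneg (by positivity)]
  calc 1 / (b - a) * ‖∫ x in a..b, fourier (-n) (x : AddCircle (b - a)) • f x‖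
      ≤ 1 / (b - a) * (C * |b - a|) := by
        gcongr
        refine intervalIntegral.norm_integral_le_of_norm_le_const fun x hx => ?_
        rw [norm_smul, fourier_apply, Circle.norm_coe, one_mul]
        exact hC x hx
    _ = C := by rw [abs_of_pos hba]; field_simp

theorem norm_fourierCoeffOn_le_of_hasDerivAt_two {a b : ℝ} (hab : a < b) {f f' f'' : ℝ → ℂ}
    {C : ℝ} {n : ℤ} (hn : n ≠ 0) (hf : ∀ x ∈ [[a, b]], HasDerivAt f (f' x) x)
    (hf' : ∀ x ∈ [[a, b]], HasDerivAt f' (f'' x) x) (hf'' : IntervalIntegrable f'' volume a b)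
    (hper : f b = f a) (hper' : f' b = f' a) (hC : ∀ x ∈ Ι a b, ‖f'' x‖ ≤ C) :
    ‖fourierCoeffOn hab f n‖ ≤ ((b - a) / (2 * π)) ^ 2 * C / n ^ 2 := by
  have hf'_int : IntervalIntegrable f' volume a b :=
    ContinuousOn.intervalIntegrable fun x hx => (hf' x hx).continuousAt.continuousWithinAt
  rw [fourierCoeffOn_of_hasDerivAt_of_eq hab hn hf hf'_int hper,
    fourierCoeffOn_of_hasDerivAt_of_eq hab hn hf' hf'' hper', ← mul_assoc, ← sq, norm_mul,
    norm_pow]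
  have hfactor : ‖((b - a : ℝ) : ℂ) / (2 * π * I * n)‖ ^ 2 = ((b - a) / (2 * π)) ^ 2 / n ^ 2 := by
    simp only [norm_div, norm_mul, Complex.norm_real, Complex.norm_ofNat, Complex.norm_I,
      Complex.norm_intCast, Real.norm_eq_abs, div_pow, mul_pow, sq_abs, mul_one, div_div]
  rw [hfactor, div_mul_eq_mul_div]
  gcongr
  exact norm_fourierCoeffOn_le hab hC n

theorem Function.Periodic.lift_eq_liftIoc {B : Type*} {T : ℝ} [Fact (0 < T)] {f : ℝ → B}
    (hf : Function.Periodic f T) (a : ℝ) : hf.lift = AddCircle.liftIoc T a f := by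
  funext y
  conv_lhs => rw [← AddCircle.coe_equivIoc (a := a) (y := y)]
  rfl

theorem Function.Periodic.deriv {F : Type*} [NormedAddCommGroup F] [NormedSpace ℝ F]
    {f : ℝ → F} {T : ℝ} (hf : Function.Periodic f T) :
    Function.Periodic (_root_.deriv f) T := fun x => by
  rw [← deriv_comp_add_const, hf.funext]

theorem summable_fourierCoeff_lift_of_contDiff {T : ℝ} [hT : Fact (0 < T)] {f : ℝ → ℂ}
    (hper : Function.Periodic f T) (hf : ContDiff ℝ 2 f) : Summable (fourierCoeff hper.lift) := by
  have hf' : ContDiff ℝ 1 (deriv f) := hf.deriv'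
  obtain ⟨C, hC⟩ := (isCompact_uIcc (a := 0) (b := T)).exists_bound_of_continuousOn
    hf'.continuous_deriv_one.continuousOn
  have hdecay : ∀ n : ℤ, n ≠ 0 → ‖fourierCoeff hper.lift n‖ ≤ (T / (2 * π)) ^ 2 * C / n ^ 2 := by
    intro n hn
    rw [hper.lift_eq_liftIoc 0, fourierCoeff_liftIoc_eq]
    simpa using norm_fourierCoeffOn_le_of_hasDerivAt_two (lt_add_of_pos_right 0 hT.out) hn
      (fun x _ => (hf.differentiable two_ne_zero x).hasDerivAt)
      (fun x _ => (hf'.differentiable one_ne_zero x).hasDerivAt)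
      ((hf'.continuous_deriv le_rfl).intervalIntegrable _ _) (hper 0) (hper.deriv 0)
      (fun x hx => hC x (by simpa using Set.uIoc_subset_uIcc hx))
  refine .of_norm_bounded_eventually
    ((Real.summable_one_div_int_pow.mpr one_lt_two).mul_left ((T / (2 * π)) ^ 2 * C)) ?_
  filter_upwards [Filter.eventually_cofinite_ne 0] with n hn
  rw [mul_one_div]
  exact hdecay n hn

instance fact_zero_lt_two_pi : Fact (0 < 2 * π) := ⟨Real.two_pi_pos⟩

theorem periodic_exp_I_mul_sin (z : ℝ) :
    Function.Periodic (fun θ : ℝ => cexp (I * z * Real.sin θ)) (2 * π) := fun θ => by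
  simp only [Real.sin_add_two_pi]

theorem contDiff_exp_I_mul_sin (z : ℝ) : ContDiff ℝ 2 (fun θ : ℝ => cexp (I * z * Real.sin θ)) :=
  (contDiff_const.mul (ofRealCLM.contDiff.comp Real.contDiff_sin)).cexp

theorem integral_exp_sin_sub_mul_eq_besselJ (z : ℝ) (n : ℤ) :
    ∫ x in (0 : ℝ)..2 * π, cexp ((z * Real.sin x - n * x : ℝ) * I) = 2 * π * besselJ n z := by
  set g := fun x : ℝ => cexp ((z * Real.sin x - n * x : ℝ) * I)
  have hg : Continuous g := by fun_prop
  have hreflect (x : ℝ) : g x + g (2 * π - x) = (2 * Real.cos (n * x - z * Real.sin x) : ℝ) := by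
    have hconj : g (2 * π - x) = cexp (-(z * Real.sin x - n * x : ℝ) * I) := by
      show cexp (((z * Real.sin (2 * π - x) - n * (2 * π - x) : ℝ) : ℂ) * I) = _
      rw [show ((z * Real.sin (2 * π - x) - n * (2 * π - x) : ℝ) : ℂ) * I
          = -(z * Real.sin x - n * x : ℝ) * I + (-n : ℤ) * (2 * π * I) by
        push_cast [Real.sin_two_pi_sub]; ring, exp_add, exp_int_mul_two_pi_mul_I, mul_one]
    rw [hconj, ← two_cos, ← neg_sub, ofReal_neg, cos_neg]
    push_cast
    rfl
  calc ∫ x in (0 : ℝ)..2 * π, g x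
      = (∫ x in (0 : ℝ)..π, g x) + ∫ x in (0 : ℝ)..π, g (2 * π - x) := by
        rw [intervalIntegral.integral_comp_sub_left, sub_zero, show 2 * π - π = π by ring,
          intervalIntegral.integral_add_adjacent_intervals (hg.intervalIntegrable _ _)
            (hg.intervalIntegrable _ _)]
    _ = ∫ x in (0 : ℝ)..π, ((2 * Real.cos (n * x - z * Real.sin x) : ℝ) : ℂ) := by
        have hg' : IntervalIntegrable (fun x => g (2 * π - x)) volume 0 π :=
          (hg.comp (continuous_sub_left _)).intervalIntegrable _ _
        rw [← intervalIntegral.integral_add (hg.intervalIntegrable _ _) hg']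
        exact intervalIntegral.integral_congr fun x _ => hreflect x
    _ = 2 * π * besselJ n z := by
        rw [intervalIntegral.integral_ofReal, intervalIntegral.integral_const_mul, besselJ]
        push_cast
        field_simp

theorem fourierCoeff_lift_exp_I_mul_sin (z : ℝ) (n : ℤ) :
    fourierCoeff (periodic_exp_I_mul_sin z).lift n = besselJ n z := by
  have hintegrand (x : ℝ) : fourier (-n) (x : AddCircle (2 * π)) •
      (periodic_exp_I_mul_sin z).lift (x : AddCircle (2 * π))
      = cexp ((z * Real.sin x - n * x : ℝ) * I) := by
    rw [fourier_coe_apply, Function.Periodic.lift_coe, smul_eq_mul, ← exp_add]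
    congr 1
    field_simp
    push_cast
    ring
  rw [fourierCoeff_eq_intervalIntegral _ n 0, zero_add]
  simp_rw [hintegrand]
  rw [integral_exp_sin_sub_mul_eq_besselJ, Complex.real_smul]
  push_cast
  field_simp

/-- Jacobi–Anger expansion: `exp(iz sinθ) = ∑_{n∈ℤ} J_n(z) e^{inθ}`,
with absolute convergence of the series. -/
theorem stmt9 (z θ : ℝ) :
    Summable (fun n : ℤ =>
      ‖(besselJ n z : ℂ) * Complex.exp (Complex.I * (n : ℂ) * (θ : ℂ))‖) ∧
    HasSum (fun n : ℤ => (besselJ n z : ℂ) * Complex.exp (Complex.I * (n : ℂ) * (θ : ℂ)))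
      (Complex.exp (Complex.I * (z : ℂ) * (Real.sin θ : ℂ))) := by
  let F : C(AddCircle (2 * π), ℂ) :=
    ⟨(periodic_exp_I_mul_sin z).lift,
      continuous_coinduced_dom.mpr (contDiff_exp_I_mul_sin z).continuous⟩
  have hsum : Summable (fourierCoeff F) :=
    summable_fourierCoeff_lift_of_contDiff (periodic_exp_I_mul_sin z) (contDiff_exp_I_mul_sin z)
  have hcoeff : fourierCoeff F = fun n => (besselJ n z : ℂ) :=
    funext (fourierCoeff_lift_exp_I_mul_sin z)
  have hterm (n : ℤ) : fourierCoeff F n • fourier n (θ : AddCircle (2 * π))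
      = besselJ n z * cexp (I * n * θ) := by
    rw [smul_eq_mul, fourier_coe_apply, hcoeff]
    congr 2
    field_simp
    push_cast
    ring
  refine ⟨?_, ?_⟩
  · simpa only [← hterm, norm_smul, fourier_apply, Circle.norm_coe, mul_one] using hsum.norm
  · have hs := has_pointwise_sum_fourier_series_of_summable hsum θ
    simp only [hterm] at hs
    exact hs
end

section
/- For real α > 0 and real y, b with b > 0 (or more generally Re(b) > 0), ∫₀^∞ (x² + α²)^{−1/2}·exp(−b√(x² + α²))·cos(xy) dx = K₀(α√(b² + y²)), where K₀ is the modified Bessel function of the second kind of order 0. -/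
/-- Modified Bessel function of the second kind of order zero,
via the integral representation `K₀(x) = ∫₀^∞ e^{−x cosh t} dt`. -/
noncomputable def besselK0 (x : ℝ) : ℝ :=
  ∫ t in Set.Ioi (0:ℝ), Real.exp (-x * Real.cosh t)

/-!
Substituting `x = α sinh u` turns the left side into `∫₀^∞ exp (-p cosh u) cos (q sinh u) du` with
`p = αb`, `q = αy`. Writing `p + iq = r e^{iθ}` with `|θ| < π/2`, the integrand is
`Re exp (-r cosh (u + iθ))`. By the Cauchy–Riemann equations its `θ`-derivative is the
`u`-derivative of `-Im exp (-r cosh (u + iθ))`, which vanishes at `u = 0` and decays at infinity, so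
the integral does not depend on `θ`; at `θ = 0` it is `K₀ r`, and `r = α √(b² + y²)`.
-/

open Real MeasureTheory Set Filter Topology

lemma self_le_cosh (u : ℝ) : u ≤ cosh u :=
  (le_abs_self u).trans <| (self_le_sinh_iff.2 (abs_nonneg u)).trans <|
    (sinh_lt_cosh _).le.trans (cosh_abs u).le

lemma abs_sinh_le_cosh (u : ℝ) : |sinh u| ≤ cosh u := by
  rw [abs_sinh, ← cosh_abs u]
  exact (sinh_lt_cosh _).le

lemma exp_neg_mul_cosh_le_cosh_mul (c u : ℝ) :
    exp (-c * cosh u) ≤ cosh u * exp (-c * cosh u) :=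
  le_mul_of_one_le_left (exp_pos _).le (one_le_cosh u)

lemma mul_exp_neg_mul_le {c : ℝ} (hc : 0 < c) (x : ℝ) :
    x * exp (-c * x) ≤ 2 / c * exp (-(c / 2) * x) := by
  have hx : x ≤ 2 / c * exp (c / 2 * x) := by
    rw [div_mul_eq_mul_div, le_div_iff₀ hc]
    nlinarith [add_one_le_exp (c / 2 * x), exp_pos (c / 2 * x)]
  calc x * exp (-c * x) ≤ 2 / c * exp (c / 2 * x) * exp (-c * x) := by gcongr
    _ = 2 / c * exp (-(c / 2) * x) := by rw [mul_assoc, ← exp_add]; ring_nf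

lemma integrableOn_cosh_mul_exp_neg_mul_cosh {c : ℝ} (hc : 0 < c) :
    IntegrableOn (fun u => cosh u * exp (-c * cosh u)) (Ioi 0) := by
  refine Integrable.mono' ((exp_neg_integrableOn_Ioi 0 (half_pos hc)).const_mul (2 / c))
    (by fun_prop) (.of_forall fun u => ?_)
  rw [norm_of_nonneg (by positivity)]
  calc cosh u * exp (-c * cosh u) ≤ 2 / c * exp (-(c / 2) * cosh u) := mul_exp_neg_mul_le hc _
    _ ≤ 2 / c * exp (-(c / 2) * u) := by
      gcongr _ * exp ?_
      nlinarith [self_le_cosh u]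

lemma tendsto_exp_neg_mul_cosh_atTop {c : ℝ} (hc : 0 < c) :
    Tendsto (fun u => exp (-c * cosh u)) atTop (𝓝 0) :=
  tendsto_exp_atBot.comp <| (tendsto_atTop_mono self_le_cosh tendsto_id).const_mul_atTop_of_neg
    (neg_lt_zero.2 hc)

/-- `exp (-r cosh (u + iθ)) = k0Kernel r θ u - i k0KernelConj r θ u`. -/
noncomputable def k0Kernel (r θ u : ℝ) : ℝ :=
  exp (-(r * cos θ) * cosh u) * cos (r * sin θ * sinh u)

noncomputable def k0KernelConj (r θ u : ℝ) : ℝ :=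
  exp (-(r * cos θ) * cosh u) * sin (r * sin θ * sinh u)

noncomputable def k0KernelDeriv (r θ u : ℝ) : ℝ :=
  exp (-(r * cos θ) * cosh u) *
    (r * sin θ * cosh u * cos (r * sin θ * sinh u) - r * cos θ * sinh u * sin (r * sin θ * sinh u))

lemma hasDerivAt_k0Kernel_angle (r θ u : ℝ) :
    HasDerivAt (fun θ => k0Kernel r θ u) (k0KernelDeriv r θ u) θ := by
  have harg : HasDerivAt (fun θ => -(r * cos θ) * cosh u) (r * sin θ * cosh u) θ :=
    (((hasDerivAt_cos θ).const_mul r).neg.mul_const (cosh u)).congr_deriv (by ring)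
  have hcos := (((hasDerivAt_sin θ).const_mul r).mul_const (sinh u)).cos
  exact (harg.exp.mul hcos).congr_deriv (by simp only [k0KernelDeriv]; ring)

lemma hasDerivAt_k0KernelConj (r θ u : ℝ) :
    HasDerivAt (k0KernelConj r θ) (k0KernelDeriv r θ u) u := by
  have hexp := ((hasDerivAt_cosh u).const_mul (-(r * cos θ))).exp
  have hsin := ((hasDerivAt_sinh u).const_mul (r * sin θ)).sin
  exact (hexp.mul hsin).congr_deriv (by simp only [k0KernelDeriv]; ring)

lemma continuous_k0Kernel (r θ : ℝ) : Continuous (k0Kernel r θ) := by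
  unfold k0Kernel; fun_prop

lemma continuous_k0KernelConj (r θ : ℝ) : Continuous (k0KernelConj r θ) := by
  unfold k0KernelConj; fun_prop

lemma continuous_k0KernelDeriv (r θ : ℝ) : Continuous (k0KernelDeriv r θ) := by
  unfold k0KernelDeriv; fun_prop

lemma abs_k0Kernel_le (r θ u : ℝ) : |k0Kernel r θ u| ≤ exp (-(r * cos θ) * cosh u) := by
  rw [k0Kernel, abs_mul, abs_exp]
  exact mul_le_of_le_one_right (exp_pos _).le (abs_cos_le_one _)

lemma abs_k0KernelConj_le (r θ u : ℝ) : |k0KernelConj r θ u| ≤ exp (-(r * cos θ) * cosh u) := by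
  rw [k0KernelConj, abs_mul, abs_exp]
  exact mul_le_of_le_one_right (exp_pos _).le (abs_sin_le_one _)

lemma abs_k0KernelDeriv_le (r θ u : ℝ) :
    |k0KernelDeriv r θ u| ≤ 2 * |r| * (cosh u * exp (-(r * cos θ) * cosh u)) := by
  have h₁ : |r * sin θ * cosh u * cos (r * sin θ * sinh u)| ≤ |r| * cosh u := by
    rw [abs_mul, abs_mul, abs_mul, abs_of_pos (cosh_pos u)]
    calc _ ≤ |r| * 1 * cosh u * 1 := by gcongr; exacts [abs_sin_le_one _, abs_cos_le_one _]
      _ = |r| * cosh u := by ring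
  have h₂ : |r * cos θ * sinh u * sin (r * sin θ * sinh u)| ≤ |r| * cosh u := by
    rw [abs_mul, abs_mul, abs_mul]
    calc _ ≤ |r| * 1 * cosh u * 1 := by
          gcongr; exacts [abs_cos_le_one _, abs_sinh_le_cosh u, abs_sin_le_one _]
      _ = |r| * cosh u := by ring
  rw [k0KernelDeriv, abs_mul, abs_exp]
  calc exp (-(r * cos θ) * cosh u) * |_ - _|
      ≤ exp (-(r * cos θ) * cosh u) * (|r| * cosh u + |r| * cosh u) := by
        gcongr; exact (abs_sub _ _).trans (add_le_add h₁ h₂)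
    _ = 2 * |r| * (cosh u * exp (-(r * cos θ) * cosh u)) := by ring

lemma integrableOn_k0Kernel {r θ : ℝ} (h : 0 < r * cos θ) : IntegrableOn (k0Kernel r θ) (Ioi 0) :=
  (integrableOn_cosh_mul_exp_neg_mul_cosh h).mono' (continuous_k0Kernel r θ).aestronglyMeasurable
    (.of_forall fun u => (abs_k0Kernel_le r θ u).trans (exp_neg_mul_cosh_le_cosh_mul _ u))

lemma integrableOn_k0KernelDeriv {r θ : ℝ} (h : 0 < r * cos θ) :
    IntegrableOn (k0KernelDeriv r θ) (Ioi 0) :=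
  ((integrableOn_cosh_mul_exp_neg_mul_cosh h).const_mul (2 * |r|)).mono'
    (continuous_k0KernelDeriv r θ).aestronglyMeasurable (.of_forall (abs_k0KernelDeriv_le r θ))

lemma integral_k0KernelDeriv_eq_zero {r θ : ℝ} (h : 0 < r * cos θ) :
    ∫ u in Ioi 0, k0KernelDeriv r θ u = 0 := by
  have hlim : Tendsto (k0KernelConj r θ) atTop (𝓝 0) :=
    squeeze_zero_norm (abs_k0KernelConj_le r θ) (tendsto_exp_neg_mul_cosh_atTop h)
  rw [integral_Ioi_of_hasDerivAt_of_tendsto (continuous_k0KernelConj r θ).continuousWithinAt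
    (fun u _ => hasDerivAt_k0KernelConj r θ u) (integrableOn_k0KernelDeriv h) hlim]
  simp [k0KernelConj]

lemma hasDerivAt_integral_k0Kernel {r θ₀ : ℝ} (h : 0 < r * cos θ₀) :
    HasDerivAt (fun θ => ∫ u in Ioi 0, k0Kernel r θ u) 0 θ₀ := by
  set c := r * cos θ₀ / 2
  have hc : 0 < c := half_pos h
  have hnhds : {θ | c < r * cos θ} ∈ 𝓝 θ₀ :=
    (continuous_const.mul continuous_cos).continuousAt.preimage_mem_nhds
      (Ioi_mem_nhds (half_lt_self h))
  have hbound : ∀ u, ∀ θ ∈ {θ | c < r * cos θ},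
      ‖k0KernelDeriv r θ u‖ ≤ 2 * |r| * (cosh u * exp (-c * cosh u)) := by
    intro u θ hθ
    refine (abs_k0KernelDeriv_le r θ u).trans ?_
    gcongr _ * (_ * exp ?_)
    nlinarith [cosh_pos u, hθ.out]
  obtain ⟨-, hderiv⟩ := hasDerivAt_integral_of_dominated_loc_of_deriv_le hnhds
    (.of_forall fun θ => (continuous_k0Kernel r θ).aestronglyMeasurable)
    (integrableOn_k0Kernel h) (continuous_k0KernelDeriv r θ₀).aestronglyMeasurable
    (.of_forall hbound) ((integrableOn_cosh_mul_exp_neg_mul_cosh hc).const_mul (2 * |r|))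
    (.of_forall fun u θ _ => hasDerivAt_k0Kernel_angle r θ u)
  rwa [integral_k0KernelDeriv_eq_zero h] at hderiv

lemma integral_k0Kernel_eq_besselK0 {r θ : ℝ} (hr : 0 < r) (hθ : θ ∈ Ioo (-(π / 2)) (π / 2)) :
    ∫ u in Ioi 0, k0Kernel r θ u = besselK0 r := by
  have hderiv : ∀ θ ∈ Ioo (-(π / 2)) (π / 2),
      HasDerivAt (fun θ => ∫ u in Ioi 0, k0Kernel r θ u) 0 θ :=
    fun θ hθ => hasDerivAt_integral_k0Kernel (mul_pos hr (cos_pos_of_mem_Ioo hθ))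
  rw [isOpen_Ioo.is_const_of_deriv_eq_zero isPreconnected_Ioo
    (fun θ hθ => (hderiv θ hθ).differentiableAt.differentiableWithinAt)
    (fun θ hθ => (hderiv θ hθ).deriv) hθ (y := 0) ⟨by linarith [pi_pos], by linarith [pi_pos]⟩]
  simp [k0Kernel, besselK0]

theorem integral_exp_neg_mul_cosh_mul_cos_mul_sinh {p : ℝ} (hp : 0 < p) (q : ℝ) :
    ∫ u in Ioi 0, exp (-p * cosh u) * cos (q * sinh u) = besselK0 (√(p ^ 2 + q ^ 2)) := by
  set z : ℂ := ⟨p, q⟩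
  have hz : ‖z‖ = √(p ^ 2 + q ^ 2) := Complex.norm_eq_sqrt_sq_add_sq z
  have hz₀ : 0 < ‖z‖ := norm_pos_iff.2 fun h0 => hp.ne' (congrArg Complex.re h0)
  have harg : z.arg ∈ Ioo (-(π / 2)) (π / 2) :=
    abs_lt.1 (Complex.abs_arg_lt_pi_div_two_iff.2 (.inl hp))
  rw [← hz, ← integral_k0Kernel_eq_besselK0 hz₀ harg]
  simp only [k0Kernel, Complex.norm_mul_cos_arg, Complex.norm_mul_sin_arg]
  rfl

lemma integral_Ioi_eq_integral_mul_cosh_smul_comp_mul_sinh {E : Type*} [NormedAddCommGroup E]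
    [NormedSpace ℝ E] {α : ℝ} (hα : 0 < α) (f : ℝ → E) :
    ∫ x in Ioi 0, f x = ∫ u in Ioi 0, (α * cosh u) • f (α * sinh u) := by
  have hmono : StrictMono fun u => α * sinh u := sinh_strictMono.const_mul hα
  have himage : (fun u => α * sinh u) '' Ioi 0 = Ioi 0 := by
    rw [show (fun u => α * sinh u) = (fun x => α * x) ∘ sinhOrderIso from rfl, image_comp,
      OrderIso.image_Ioi, image_mul_left_Ioi hα]
    simp
  conv_lhs => rw [← himage, integral_image_eq_integral_abs_deriv_smul measurableSet_Ioi
    (fun u _ => ((hasDerivAt_sinh u).const_mul α).hasDerivWithinAt) hmono.injective.injOn]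
  simp_rw [abs_of_pos (mul_pos hα (cosh_pos _))]

lemma sqrt_mul_sinh_sq_add_sq {α : ℝ} (hα : 0 ≤ α) (u : ℝ) :
    √((α * sinh u) ^ 2 + α ^ 2) = α * cosh u := by
  rw [show (α * sinh u) ^ 2 + α ^ 2 = (α * cosh u) ^ 2 by rw [mul_pow, mul_pow, cosh_sq]; ring,
    sqrt_sq (mul_nonneg hα (cosh_pos u).le)]

/-- Fourier cosine transform identity:
`∫₀^∞ (x²+α²)^{−1/2} e^{−b√(x²+α²)} cos(xy) dx = K₀(α√(b²+y²))`
for `α > 0`, `b > 0`, `y ∈ ℝ`. -/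
theorem stmt13 (α b y : ℝ) (hα : 0 < α) (hb : 0 < b) :
    (∫ x in Set.Ioi (0:ℝ),
        (x ^ 2 + α ^ 2) ^ (-(1:ℝ)/2) * Real.exp (-b * Real.sqrt (x ^ 2 + α ^ 2)) *
          Real.cos (x * y))
      = besselK0 (α * Real.sqrt (b ^ 2 + y ^ 2)) := by
  have hsubst (u : ℝ) : (α * cosh u) • (((α * sinh u) ^ 2 + α ^ 2) ^ (-(1:ℝ)/2) *
      exp (-b * √((α * sinh u) ^ 2 + α ^ 2)) * cos (α * sinh u * y)) =
      exp (-(α * b) * cosh u) * cos (α * y * sinh u) := by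
    have hpos : 0 < α * cosh u := mul_pos hα (cosh_pos u)
    rw [neg_div, rpow_neg (by positivity), ← sqrt_eq_rpow, sqrt_mul_sinh_sq_add_sq hα.le,
      smul_eq_mul]
    field_simp
  rw [integral_Ioi_eq_integral_mul_cosh_smul_comp_mul_sinh hα,
    integral_congr_ae (.of_forall hsubst),
    integral_exp_neg_mul_cosh_mul_cos_mul_sinh (mul_pos hα hb),
    show (α * b) ^ 2 + (α * y) ^ 2 = α ^ 2 * (b ^ 2 + y ^ 2) by ring, sqrt_mul (sq_nonneg α),
    sqrt_sq hα.le]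
end

section
/- Let α > 0, x, y ∈ ℝ with r = √(x² + y²) > 0, γ² = (x + r)/(2r), and βt = α/r. Then for every k > 0, the identity (kx + βt/k)² + k²y² = 4α(z² + γ²) holds, where z = |kr − α/(kr)|/√(4α). -/
/- Expanding both squares, the cross terms are `2αx/r` on the left and `-2α` on the right, and
`k²x² + k²y² = k²r²`; the `+2α` in `2α(x + r)/r` makes up the difference. -/

theorem sq_mul_add_div_add_sq_eq {K : Type*} [Field K] {α k r x y : K} (hk : k ≠ 0) (hr : r ≠ 0)
    (hr2 : r ^ 2 = x ^ 2 + y ^ 2) :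
    (k * x + α / r / k) ^ 2 + k ^ 2 * y ^ 2 = (k * r - α / (k * r)) ^ 2 + 2 * α * ((x + r) / r) := by
  field_simp
  linear_combination (-k ^ 4 * r ^ 2) * hr2

/-- With `r = √(x²+y²) > 0`, `γ² = (x+r)/(2r)`, `βt = α/r` and
`z = |kr − α/(kr)|/√(4α)`, for every `k > 0` one has
`(kx + βt/k)² + k²y² = 4α(z² + γ²)`. -/
theorem stmt17 (α x y : ℝ) (hα : 0 < α)
    (hr : 0 < Real.sqrt (x ^ 2 + y ^ 2)) (k : ℝ) (hk : 0 < k) :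
    let r := Real.sqrt (x ^ 2 + y ^ 2)
    let z := |k * r - α / (k * r)| / Real.sqrt (4 * α)
    (k * x + (α / r) / k) ^ 2 + k ^ 2 * y ^ 2
      = 4 * α * (z ^ 2 + (x + r) / (2 * r)) := by
  intro r z
  have hr2 : r ^ 2 = x ^ 2 + y ^ 2 := Real.sq_sqrt (by positivity)
  have hz : 4 * α * z ^ 2 = (k * r - α / (k * r)) ^ 2 := by
    simp only [z, div_pow, sq_abs, Real.sq_sqrt (by positivity : (0 : ℝ) ≤ 4 * α)]
    field_simp
  rw [sq_mul_add_div_add_sq_eq hk.ne' hr.ne' hr2, ← hz]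
  ring
end
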